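/- arXiv:2410.19395 — 3 statements merged into one kernel-verified Lean document; each statement's English description precedes it below -/
import Mathlib

section
/- Let N(g) denote the number of zeros of a nonzero polynomial g ∈ ℂ[z] counted with multiplicity and N¹(g) the number of distinct zeros. Let G be a homogeneous polynomial in n+1 variables and f₀,…,fₙ ∈ ℂ[z] polynomials with no common zeros such that G(f₀,…,fₙ) ≠ 0. Then N(G(f)) − N¹(G(f)) ≤ Σᵢ₌₀ⁿ ( N(Gᵢ) − N¹(Gᵢ) ), where Gᵢ is the numerator of the rational function G(f₀/fᵢ,…,fₙ/fᵢ) in lowest terms (i.e., the count where for each zero z₀ of G(f) one uses an index i with fᵢ(z₀) ≠ 0). -/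
/-- Number of zeros of a polynomial counted with multiplicity. -/
noncomputable def Nfull (g : Polynomial ℂ) : ℕ := Multiset.card g.roots

/-- Number of distinct zeros of a polynomial (counted without multiplicity). -/
noncomputable def Ndist (g : Polynomial ℂ) : ℕ := g.roots.toFinset.card

/-!
By homogeneity, `G(f₀/fᵢ, …, fₙ/fᵢ) = G(f) / fᵢ ^ d`. At a point `z` with `fᵢ(z) ≠ 0`,
reducing this fraction to lowest terms cancels only factors of `fᵢ ^ d`, none of which vanishes
at `z`, so the numerator `Gᵢ` has the same multiplicity at `z` as `G(f)`. Since the `fᵢ` have no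
common zero, every zero `z` of `G(f)` has such an index `i`, so its excess multiplicity
`ord_z - 1` is bounded by the sum over all `i` of the excess multiplicities of `Gᵢ` at `z`;
summing over `z` gives the claim.
-/

open Polynomial

namespace MvPolynomial.IsHomogeneous

variable {σ R : Type*} [CommSemiring R] {φ : MvPolynomial σ R} {d : ℕ}

theorem aeval_const_mul {S : Type*} [CommSemiring S] [Algebra R S] (hφ : φ.IsHomogeneous d)
    (c : S) (x : σ → S) :
    MvPolynomial.aeval (fun j => c * x j) φ = c ^ d * MvPolynomial.aeval x φ := by
  rw [aeval_def, aeval_def, eval₂_eq, eval₂_eq, Finset.mul_sum]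
  refine Finset.sum_congr rfl fun m hm => ?_
  have hdeg : ∑ i ∈ m.support, m i = d := by
    simpa [Finsupp.degree, Finsupp.weight_apply, Finsupp.sum] using hφ (mem_support_iff.mp hm)
  simp only [mul_pow, Finset.prod_mul_distrib, Finset.prod_pow_eq_pow_sum, hdeg]
  ring

theorem aeval_div_const {L : Type*} [Semifield L] [Algebra R L] (hφ : φ.IsHomogeneous d)
    (x : σ → L) (c : L) :
    MvPolynomial.aeval (fun j => x j / c) φ = MvPolynomial.aeval x φ / c ^ d := by
  simp_rw [div_eq_inv_mul, hφ.aeval_const_mul, inv_pow]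

end MvPolynomial.IsHomogeneous

namespace RatFunc

variable {K : Type*} [Field K]

theorem rootMultiplicity_num_div (p q : K[X]) {z : K} (hq : q.eval z ≠ 0) :
    (num (algebraMap _ _ p / algebraMap _ _ q)).rootMultiplicity z = p.rootMultiplicity z := by
  set r : RatFunc K := algebraMap _ _ p / algebraMap _ _ q
  rcases eq_or_ne p 0 with rfl | hp
  · simp [r]
  have hq0 : q ≠ 0 := by rintro rfl; exact hq Polynomial.eval_zero
  have hcross : r.num * q = p * r.denom := (num_mul_eq_mul_denom_iff hq0).mpr rfl
  have hnum : r.num ≠ 0 := by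
    rintro h
    rw [h, zero_mul, eq_comm] at hcross
    exact mul_ne_zero hp (denom_ne_zero r) hcross
  have hdenom : r.denom.eval z ≠ 0 := fun h =>
    hq (eval_eq_zero_of_dvd_of_eval_eq_zero (denom_div_dvd p q) h)
  have := congrArg (rootMultiplicity z) hcross
  rwa [rootMultiplicity_mul (mul_ne_zero hnum hq0),
    rootMultiplicity_mul (mul_ne_zero hp (denom_ne_zero r)),
    rootMultiplicity_eq_zero hq, rootMultiplicity_eq_zero hdenom, add_zero, add_zero] at this

end RatFunc

theorem Polynomial.sum_rootMultiplicity_sub_one_le {R : Type*} [CommRing R] [IsDomain R]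
    [DecidableEq R] (g : R[X]) (s : Finset R) :
    ∑ z ∈ s, (g.rootMultiplicity z - 1) ≤
      ∑ z ∈ g.roots.toFinset, (g.rootMultiplicity z - 1) :=
  Finset.sum_le_sum_of_ne_zero fun z _ hz => by
    rw [Multiset.mem_toFinset, ← Multiset.count_pos, count_roots]
    omega

theorem Nfull_sub_Ndist_eq_sum (g : ℂ[X]) :
    (Nfull g : ℤ) - Ndist g =
      ((∑ z ∈ g.roots.toFinset, (g.rootMultiplicity z - 1) : ℕ) : ℤ) := by
  have hpos : ∀ z ∈ g.roots.toFinset, 1 ≤ g.rootMultiplicity z := fun z hz => by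
    rwa [Multiset.mem_toFinset, ← Multiset.count_pos, count_roots] at hz
  rw [Nfull, Ndist, Nat.cast_sum, ← Multiset.toFinset_sum_count_eq, Finset.card_eq_sum_ones,
    Nat.cast_sum, Nat.cast_sum, ← Finset.sum_sub_distrib]
  refine Finset.sum_congr rfl fun z hz => ?_
  rw [count_roots, Nat.cast_sub (hpos z hz), Nat.cast_one]

theorem stmt3_general (n : ℕ) (d : ℕ) (G : MvPolynomial (Fin (n + 1)) ℂ)
    (hG : G.IsHomogeneous d)
    (f : Fin (n + 1) → Polynomial ℂ)
    (hcom : ∀ z : ℂ, ∃ j, (f j).eval z ≠ 0) :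
    (Nfull (MvPolynomial.aeval f G) : ℤ) - (Ndist (MvPolynomial.aeval f G) : ℤ) ≤
      ∑ i : Fin (n + 1),
        ((Nfull (RatFunc.num (MvPolynomial.aeval
            (fun j => algebraMap (Polynomial ℂ) (RatFunc ℂ) (f j) /
              algebraMap (Polynomial ℂ) (RatFunc ℂ) (f i)) G)) : ℤ) -
         (Ndist (RatFunc.num (MvPolynomial.aeval
            (fun j => algebraMap (Polynomial ℂ) (RatFunc ℂ) (f j) /
              algebraMap (Polynomial ℂ) (RatFunc ℂ) (f i)) G)) : ℤ)) := by
  set g := MvPolynomial.aeval f G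
  set Gnum : Fin (n + 1) → ℂ[X] := fun i => RatFunc.num (MvPolynomial.aeval
    (fun j => algebraMap ℂ[X] (RatFunc ℂ) (f j) / algebraMap ℂ[X] (RatFunc ℂ) (f i)) G)
  have hmult : ∀ i z, (f i).eval z ≠ 0 →
      (Gnum i).rootMultiplicity z = g.rootMultiplicity z := by
    intro i z hz
    have hfd : (f i ^ d).eval z ≠ 0 := by rw [eval_pow]; exact pow_ne_zero d hz
    simp only [Gnum]
    rw [hG.aeval_div_const, ← map_pow, ← Function.comp_def (algebraMap _ _) f,
      MvPolynomial.aeval_algebraMap_apply, RatFunc.rootMultiplicity_num_div _ _ hfd]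
  simp_rw [Nfull_sub_Ndist_eq_sum, ← Nat.cast_sum, Nat.cast_le]
  calc ∑ z ∈ g.roots.toFinset, (g.rootMultiplicity z - 1)
      ≤ ∑ z ∈ g.roots.toFinset, ∑ i, ((Gnum i).rootMultiplicity z - 1) :=
        Finset.sum_le_sum fun z _ => by
          obtain ⟨i, hi⟩ := hcom z
          rw [← hmult i z hi]
          exact Finset.single_le_sum (f := fun i => (Gnum i).rootMultiplicity z - 1)
            (fun _ _ => Nat.zero_le _) (Finset.mem_univ i)
    _ = ∑ i, ∑ z ∈ g.roots.toFinset, ((Gnum i).rootMultiplicity z - 1) := Finset.sum_comm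
    _ ≤ ∑ i, ∑ z ∈ (Gnum i).roots.toFinset, ((Gnum i).rootMultiplicity z - 1) :=
        Finset.sum_le_sum fun i _ => (Gnum i).sum_rootMultiplicity_sub_one_le _

/-- For `G` homogeneous and `f 0, …, f n` polynomials without common zeros
with `G(f) ≠ 0`, the difference between the zero count with multiplicity and the
truncated (distinct) zero count of `G(f)` is bounded by the sum over `i` of the
corresponding differences for the numerators `Gᵢ` of the rational functions
`G(f₀/fᵢ, …, fₙ/fᵢ)` in lowest terms. -/
theorem stmt3 (n : ℕ) (d : ℕ) (G : MvPolynomial (Fin (n + 1)) ℂ)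
    (hG : G.IsHomogeneous d)
    (f : Fin (n + 1) → Polynomial ℂ)
    (hcom : ∀ z : ℂ, ∃ j, (f j).eval z ≠ 0)
    (hGf : MvPolynomial.aeval f G ≠ 0) :
    (Nfull (MvPolynomial.aeval f G) : ℤ) - (Ndist (MvPolynomial.aeval f G) : ℤ) ≤
      ∑ i : Fin (n + 1),
        ((Nfull (RatFunc.num (MvPolynomial.aeval
            (fun j => algebraMap (Polynomial ℂ) (RatFunc ℂ) (f j) /
              algebraMap (Polynomial ℂ) (RatFunc ℂ) (f i)) G)) : ℤ) -
         (Ndist (RatFunc.num (MvPolynomial.aeval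
            (fun j => algebraMap (Polynomial ℂ) (RatFunc ℂ) (f j) /
              algebraMap (Polynomial ℂ) (RatFunc ℂ) (f i)) G)) : ℤ)) :=
  stmt3_general n d G hG f hcom
end

section
/- With the same setup (u₁,…,uₙ nowhere-vanishing holomorphic on Y, D_u defined on polynomials with meromorphic coefficients by D_u(Σ a_𝐢 x^𝐢) = Σ (a_𝐢 u^𝐢)'/u^𝐢 · x^𝐢), the operator D_u satisfies the Leibniz rule: D_u(FG) = D_u(F)·G + F·D_u(G) for all polynomials F, G with meromorphic coefficients. -/
open scoped BigOperators

/-- The operator `D_u` on polynomials over a field `K` (of "meromorphic functions"),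
with differentiation given by a derivation `δ` and units `u j ∈ Kˣ`:
`D_u(∑ a_𝐢 x^𝐢) = ∑ (δ(a_𝐢 u^𝐢)/u^𝐢) x^𝐢`. -/
noncomputable def Du {n : ℕ} {K : Type} [Field K] (δ : Derivation ℤ K K)
    (u : Fin n → Kˣ) (F : MvPolynomial (Fin n) K) : MvPolynomial (Fin n) K :=
  ∑ m ∈ F.support,
    MvPolynomial.monomial m
      (δ (F.coeff m * ∏ j : Fin n, (u j : K) ^ (m j)) / ∏ j : Fin n, (u j : K) ^ (m j))

noncomputable def Uu {n : ℕ} {K : Type} [Field K] (u : Fin n → Kˣ) (m : Fin n →₀ ℕ) : K :=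
  ∏ j : Fin n, (u j : K) ^ (m j)

lemma Uu_ne_zero {n : ℕ} {K : Type} [Field K] (u : Fin n → Kˣ) (m : Fin n →₀ ℕ) :
    Uu u m ≠ 0 := by
  apply Finset.prod_ne_zero_iff.2
  intro j _
  exact pow_ne_zero _ (u j).ne_zero

lemma Uu_add {n : ℕ} {K : Type} [Field K] (u : Fin n → Kˣ) (p q : Fin n →₀ ℕ) :
    Uu u (p + q) = Uu u p * Uu u q := by
  simp [Uu, pow_add, Finset.prod_mul_distrib]

lemma coeff_Du {n : ℕ} {K : Type} [Field K] (δ : Derivation ℤ K K) (u : Fin n → Kˣ)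
    (F : MvPolynomial (Fin n) K) (m : Fin n →₀ ℕ) :
    (Du δ u F).coeff m = δ (F.coeff m * Uu u m) / Uu u m := by
  unfold Du
  rw [MvPolynomial.coeff_sum]
  simp only [MvPolynomial.coeff_monomial]
  rw [Finset.sum_ite_eq' F.support m
    (fun b => δ (F.coeff b * ∏ j : Fin n, (u j : K) ^ (b j)) / ∏ j : Fin n, (u j : K) ^ (b j))]
  by_cases h : m ∈ F.support
  · simp [h, Uu]
  · simp [h, MvPolynomial.notMem_support_iff.1 h]

/-- The operator `D_u` satisfies the Leibniz rule
`D_u(FG) = D_u(F)·G + F·D_u(G)`. -/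
theorem stmt5 {n : ℕ} {K : Type} [Field K] (δ : Derivation ℤ K K) (u : Fin n → Kˣ)
    (F G : MvPolynomial (Fin n) K) :
    Du δ u (F * G) = Du δ u F * G + F * Du δ u G := by
  ext m
  rw [MvPolynomial.coeff_add, coeff_Du, MvPolynomial.coeff_mul, MvPolynomial.coeff_mul,
    MvPolynomial.coeff_mul, Finset.sum_mul, map_sum, Finset.sum_div, ← Finset.sum_add_distrib]
  refine Finset.sum_congr rfl ?_
  rintro ⟨p, q⟩ hpq
  have hm : p + q = m := (Finset.HasAntidiagonal.mem_antidiagonal.1 hpq)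
  rw [coeff_Du, coeff_Du, ← hm, Uu_add]
  have hp := Uu_ne_zero u p
  have hq := Uu_ne_zero u q
  have key : F.coeff p * G.coeff q * (Uu u p * Uu u q)
      = (F.coeff p * Uu u p) * (G.coeff q * Uu u q) := by ring
  rw [key, Derivation.leibniz]
  field_simp
  ring
end

section
/- Let m₁,…,mₙ ∈ ℤ with gcd(m₁,…,mₙ) = 1 and |m₁| + ⋯ + |mₙ| ≤ M. Then (m₁,…,mₙ) extends to a ℤ-basis (m₁,…,mₙ), (a₂₁,…,a₂ₙ), …, (a_{n1},…,a_{nn}) of ℤⁿ such that |a_{i1}| + ⋯ + |a_{in}| ≤ M + n for each 2 ≤ i ≤ n. -/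
/-!
Induct on `n`. Write `m = (x, g • m')` where `g ≥ 0` is the gcd of the tail of `m`, so that `m'`
is primitive and `x` is coprime to `g`. If `g = 0` then `x = ±1` and a diagonal matrix works.
Otherwise extend `m'` by induction to `B ∈ GLₙ(ℤ)`, choose `g b - x a = 1` with `0 ≤ a < g`, and
take the rows `(x, g • m')`, `(b, a • m')`, `(0, Bᵢ)` for `i ≥ 1`. Expanding along the first
column gives determinant `(x a - b g) det B = -det B`. The only new row has ℓ¹-norm
`|b| + a ‖m'‖₁ ≤ (1 + |x|) + g ‖m'‖₁ = ‖m‖₁ + 1`, and `‖m'‖₁ ≤ ‖m‖₁` controls the rows of `B`.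
-/

open Finset Matrix

theorem Fin.gcd_cons {α : Type*} [CommMonoidWithZero α] [NormalizedGCDMonoid α] {n : ℕ}
    (x : α) (f : Fin n → α) :
    univ.gcd (Fin.cons x f : Fin (n + 1) → α) = GCDMonoid.gcd x (univ.gcd f) := by
  rw [Fin.univ_succ, cons_eq_insert, gcd_insert]
  simp [Finset.gcd_def, Function.comp_def]

theorem Int.exists_bounded_bezout {x g : ℤ} (hg : 0 < g) (h : IsCoprime x g) :
    ∃ a b : ℤ, g * b - x * a = 1 ∧ 0 ≤ a ∧ a < g ∧ |b| ≤ 1 + |x| := by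
  obtain ⟨u, v, huv⟩ := h
  set a := -u % g
  have ha : a = -u - g * (-u / g) := Int.emod_def _ _
  have ha0 : 0 ≤ a := Int.emod_nonneg _ hg.ne'
  set b := v - x * (-u / g)
  have hab : g * b - x * a = 1 := by rw [ha]; linear_combination huv
  refine ⟨a, b, hab, ha0, Int.emod_lt_of_pos _ hg, le_of_mul_le_mul_left ?_ hg⟩
  calc g * |b| = |1 + x * a| := by
        rw [show 1 + x * a = g * b by linarith, abs_mul, abs_of_pos hg]
    _ ≤ 1 + |x| * a := by simpa [abs_mul, abs_of_nonneg ha0] using abs_add_le 1 (x * a)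
    _ ≤ g * (1 + |x|) := by nlinarith [abs_nonneg x, Int.emod_lt_of_pos (-u) hg]

variable {n : ℕ}

section BezoutStack

variable {R : Type*} [CommRing R]

def bezoutStack (x g b a : R) (B : Matrix (Fin (n + 1)) (Fin (n + 1)) R) :
    Matrix (Fin (n + 2)) (Fin (n + 2)) R :=
  of fun i => vecCons (vecCons x (Pi.single 0 b) i)
    (vecCons (g • B 0) (vecCons (a • B 0) fun k => B k.succ) i)

variable (x g b a : R) (B : Matrix (Fin (n + 1)) (Fin (n + 1)) R)

@[simp] theorem bezoutStack_zero : bezoutStack x g b a B 0 = vecCons x (g • B 0) := rfl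

@[simp] theorem bezoutStack_one : bezoutStack x g b a B 1 = vecCons b (a • B 0) := by
  ext j; simp [bezoutStack]

@[simp] theorem bezoutStack_succ_succ (i : Fin n) :
    bezoutStack x g b a B i.succ.succ = vecCons 0 (B i.succ) := by
  ext j; simp [bezoutStack]

theorem det_bezoutStack : (bezoutStack x g b a B).det = (x * a - b * g) * B.det := by
  have h0 : (bezoutStack x g b a B).submatrix Fin.succ Fin.succ = B.updateRow 0 (a • B 0) := by
    ext i j
    cases i using Fin.cases <;> simp [bezoutStack]
  have h1 : (bezoutStack x g b a B).submatrix (Fin.succAbove 1) Fin.succ =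
      B.updateRow 0 (g • B 0) := by
    ext i j
    cases i using Fin.cases <;> simp [bezoutStack]
  rw [det_succ_column_zero, Fin.sum_univ_succ, Fin.sum_univ_succ, Fin.succAbove_zero, h0,
    Fin.succ_zero_eq_one, h1]
  simp [bezoutStack, det_updateRow_smul]
  ring

end BezoutStack

def l1Norm (v : Fin n → ℤ) : ℤ := ∑ j, |v j|

theorem l1Norm_nonneg (v : Fin n → ℤ) : 0 ≤ l1Norm v :=
  sum_nonneg fun _ _ => abs_nonneg _

@[simp] theorem l1Norm_vecCons (x : ℤ) (v : Fin n → ℤ) :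
    l1Norm (vecCons x v) = |x| + l1Norm v := by
  simp [l1Norm, Fin.sum_univ_succ]

@[simp] theorem l1Norm_smul (c : ℤ) (v : Fin n → ℤ) : l1Norm (c • v) = |c| * l1Norm v := by
  simp [l1Norm, mul_sum, abs_mul]

@[simp] theorem l1Norm_single (i : Fin n) (c : ℤ) : l1Norm (Pi.single i c) = |c| := by
  simp [l1Norm, Pi.single_apply, apply_ite]

theorem exists_unimodular_completion_of_tail_eq_zero (m : Fin (n + 1) → ℤ)
    (hm : univ.gcd m = 1) (ht : Fin.tail m = 0) :
    ∃ A : Matrix (Fin (n + 1)) (Fin (n + 1)) ℤ,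
      IsUnit A.det ∧ A 0 = m ∧ ∀ i ≠ 0, l1Norm (A i) ≤ l1Norm m + n := by
  have hm0 : IsUnit (m 0) := by
    rwa [← Fin.cons_self_tail m, Fin.gcd_cons, ht,
      (gcd_eq_zero_iff (f := (0 : Fin n → ℤ))).2 fun _ _ => rfl, gcd_zero_right,
      normalize_eq_one] at hm
  have hm_eq : m = Pi.single 0 (m 0) := by
    ext j
    cases j using Fin.cases with
    | zero => simp
    | succ j => rw [Pi.single_eq_of_ne (Fin.succ_ne_zero j)]; exact congrFun ht j
  refine ⟨diagonal (vecCons (m 0) 1), by simpa [det_diagonal, Fin.prod_univ_succ], ?_, ?_⟩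
  · rw [hm_eq]; ext j; simp [diagonal_apply, Pi.single_apply, eq_comm]
  · intro i hi
    obtain ⟨i, rfl⟩ := Fin.exists_succ_eq.2 hi
    have hrow : diagonal (vecCons (m 0) 1) i.succ = Pi.single i.succ 1 := by
      ext j; simp [diagonal_apply, Pi.single_apply, eq_comm]
    rw [hrow, hm_eq, l1Norm_single, l1Norm_single, Int.isUnit_iff_abs_eq.1 hm0, abs_one]
    omega

theorem exists_unimodular_completion_vecCons_smul {x g : ℤ} (hg : 0 < g) (hx : IsCoprime x g)
    {B : Matrix (Fin (n + 1)) (Fin (n + 1)) ℤ} (hB : IsUnit B.det)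
    (hBrow : ∀ i ≠ 0, l1Norm (B i) ≤ l1Norm (B 0) + n) :
    ∃ A : Matrix (Fin (n + 2)) (Fin (n + 2)) ℤ, IsUnit A.det ∧ A 0 = vecCons x (g • B 0) ∧
      ∀ i ≠ 0, l1Norm (A i) ≤ l1Norm (vecCons x (g • B 0)) + (n + 1) := by
  obtain ⟨a, b, hab, ha0, hag, hb⟩ := Int.exists_bounded_bezout hg hx
  refine ⟨bezoutStack x g b a B, ?_, bezoutStack_zero .., fun i hi => ?_⟩
  · rw [det_bezoutStack, show x * a - b * g = -1 by linarith, neg_one_mul]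
    exact hB.neg
  have hS := l1Norm_nonneg (B 0)
  obtain ⟨i, rfl⟩ := Fin.exists_succ_eq.2 hi
  cases i using Fin.cases with
  | zero =>
    simp only [Fin.succ_zero_eq_one, bezoutStack_one, l1Norm_vecCons, l1Norm_smul,
      abs_of_pos hg, abs_of_nonneg ha0]
    nlinarith
  | succ i =>
    simp only [bezoutStack_succ_succ, l1Norm_vecCons, l1Norm_smul, abs_zero, zero_add,
      abs_of_pos hg]
    nlinarith [hBrow i.succ (Fin.succ_ne_zero i), abs_nonneg x]

theorem exists_unimodular_completion (m : Fin (n + 1) → ℤ) (hm : univ.gcd m = 1) :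
    ∃ A : Matrix (Fin (n + 1)) (Fin (n + 1)) ℤ,
      IsUnit A.det ∧ A 0 = m ∧ ∀ i ≠ 0, l1Norm (A i) ≤ l1Norm m + n := by
  induction n with
  | zero => exact exists_unimodular_completion_of_tail_eq_zero m hm (Subsingleton.elim _ _)
  | succ n ih =>
    by_cases ht : Fin.tail m = 0
    · exact exists_unimodular_completion_of_tail_eq_zero m hm ht
    set g := univ.gcd (Fin.tail m)
    obtain ⟨m', hm't, hm'⟩ := extract_gcd (Fin.tail m) univ_nonempty
    have hg : 0 < g := by
      refine (Int.nonneg_of_normalize_eq_self normalize_gcd).lt_of_ne' fun hg0 => ht ?_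
      ext j
      exact gcd_eq_zero_iff.1 hg0 j (mem_univ j)
    have hx : IsCoprime (m 0) g := by
      rw [← gcd_isUnit_iff, ← Fin.gcd_cons, Fin.cons_self_tail, hm]
      exact isUnit_one
    obtain ⟨B, hB, rfl, hBrow⟩ := ih m' hm'
    have hm_eq : m = vecCons (m 0) (g • B 0) := by
      ext j
      cases j using Fin.cases with
      | zero => rfl
      | succ j => exact hm't j (mem_univ j)
    rw [hm_eq]
    exact_mod_cast exists_unimodular_completion_vecCons_smul hg hx hB hBrow

/-- A primitive integer vector `m ∈ ℤⁿ` (gcd of the entries `= 1`) with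
`‖m‖₁ ≤ M` extends to a ℤ-basis of `ℤⁿ`, i.e. to a matrix `A ∈ GLₙ(ℤ)` with first row
`m`, whose remaining rows all have ℓ¹-norm at most `M + n`. -/
theorem stmt14 (n : ℕ) (hn : 0 < n) (M : ℕ) (m : Fin n → ℤ)
    (hgcd : Finset.univ.gcd m = 1)
    (hM : ∑ j : Fin n, |m j| ≤ (M : ℤ)) :
    ∃ A : Matrix (Fin n) (Fin n) ℤ,
      (A.det = 1 ∨ A.det = -1) ∧
      A ⟨0, hn⟩ = m ∧
      ∀ i : Fin n, i ≠ ⟨0, hn⟩ → ∑ j : Fin n, |A i j| ≤ (M : ℤ) + n := by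
  obtain ⟨n, rfl⟩ := Nat.exists_eq_add_one_of_ne_zero hn.ne'
  obtain ⟨A, hA, hA0, hrow⟩ := exists_unimodular_completion m hgcd
  refine ⟨A, Int.isUnit_iff.1 hA, hA0, fun i hi => (hrow i hi).trans ?_⟩
  change ∑ j, |m j| + n ≤ M + ↑(n + 1)
  push_cast
  linarith
end
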